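/- For every real number s and all nonnegative integers m and n, the mixed partial derivative ∂_x^m ∂_y^n (e^{−x} + e^{−y} − 1)^s evaluated at (x,y) = (0,0) equals (−1)^{m+n} · Σ_{ℓ=0}^{m} (s)_ℓ · S(m,ℓ) · (s−ℓ)^n, where (s)_ℓ = s(s−1)⋯(s−ℓ+1) is the falling factorial (with (s)_0 = 1) and S(m,ℓ) is the Stirling number of the second kind. -/

import Mathlib

/-- Stirling numbers of the second kind: `stirling2 n k` is the number of
partitions of an `n`-element set into `k` nonempty blocks. -/
def stirling2 : ℕ → ℕ → ℕ
  | 0, 0 => 1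
  | 0, _+1 => 0
  | _+1, 0 => 0
  | n+1, k+1 => (k + 1) * stirling2 n (k + 1) + stirling2 n k

/-- The falling factorial `(s)_ℓ = s (s-1) ⋯ (s - ℓ + 1)`, with `(s)_0 = 1`. -/
def fallingFactorial (s : ℝ) (l : ℕ) : ℝ := ∏ i ∈ Finset.range l, (s - i)

/-!
Differentiating in `y` first, induction on `n` through the recurrence for `S(n, k)` gives
`∂_y^n (c + e^{-y})^s = (-1)^n Σ_k S(n, k) (s)_k e^{-ky} (c + e^{-y})^{s-k}`. At `y = 0` and
`c = e^{-x} - 1` this is a combination of the exponentials `e^{(k-s)x}`, whose `m`-th derivatives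
at `0` are `(k - s)^m`. The outcome is the claimed formula with `m` and `n` exchanged, and
`T_s(m, n) = Σ_ℓ (s)_ℓ S(m, ℓ) (s - ℓ)^n` is symmetric in `m` and `n` because
`T_s(m + 1, n) + T_s(m, n + 1) = s (T_s(m, n) + T_{s-1}(m, n))` and `T_s(m, 0) = T_s(0, m) = s^m`.
-/

open Real Finset Nat Topology

theorem stirling2_eq_stirlingSecond : stirling2 = stirlingSecond := by
  funext n k
  induction n generalizing k with
  | zero => cases k <;> rfl
  | succ n ih =>
    cases k with
    | zero => rfl
    | succ k => rw [stirling2, stirlingSecond_succ_succ, ih, ih]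

theorem sum_range_stirlingSecond_succ_mul {R : Type*} [CommSemiring R] (n : ℕ) (b : ℕ → R) :
    ∑ k ∈ range (n + 2), (stirlingSecond (n + 1) k : R) * b k =
      ∑ k ∈ range (n + 1), (stirlingSecond n k : R) * (k * b k + b (k + 1)) := by
  have shift : ∑ k ∈ range (n + 1), (stirlingSecond n k : R) * (k * b k) =
      ∑ k ∈ range (n + 1), ((k + 1) * stirlingSecond n (k + 1) : R) * b (k + 1) := by
    rw [sum_range_succ', sum_range_succ _ n, stirlingSecond_eq_zero_of_lt (lt_add_one n)]
    simp only [Nat.cast_zero, zero_mul, mul_zero, add_zero]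
    refine sum_congr rfl fun k _ => ?_
    push_cast
    ring
  rw [sum_range_succ', stirlingSecond_succ_zero, Nat.cast_zero, zero_mul, add_zero]
  simp only [mul_add, sum_add_distrib, shift]
  rw [← sum_add_distrib]
  refine sum_congr rfl fun k _ => ?_
  rw [stirlingSecond_succ_succ]
  push_cast
  ring

theorem fallingFactorial_succ (s : ℝ) (l : ℕ) :
    fallingFactorial s (l + 1) = fallingFactorial s l * (s - l) :=
  prod_range_succ _ _

theorem fallingFactorial_succ_eq_mul_sub_one (s : ℝ) (l : ℕ) :
    fallingFactorial s (l + 1) = s * fallingFactorial (s - 1) l := by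
  rw [fallingFactorial, prod_range_succ', fallingFactorial, Nat.cast_zero, sub_zero, mul_comm]
  congr 1
  refine prod_congr rfl fun i _ => ?_
  push_cast
  ring

noncomputable def stirlingPowerSum (s : ℝ) (m n : ℕ) : ℝ :=
  ∑ l ∈ range (m + 1), fallingFactorial s l * (stirlingSecond m l : ℝ) * (s - l) ^ n

theorem stirlingPowerSum_succ_left (s : ℝ) (m n : ℕ) :
    stirlingPowerSum s (m + 1) n = ∑ k ∈ range (m + 1), (stirlingSecond m k : ℝ) *
      (fallingFactorial s k * (k * (s - k) ^ n + (s - k) * (s - (k + 1)) ^ n)) := by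
  calc stirlingPowerSum s (m + 1) n
      = ∑ k ∈ range (m + 2), (stirlingSecond (m + 1) k : ℝ) *
          (fallingFactorial s k * (s - k) ^ n) :=
        sum_congr rfl fun k _ => by ring
    _ = _ := by
        rw [sum_range_stirlingSecond_succ_mul]
        refine sum_congr rfl fun k _ => ?_
        rw [fallingFactorial_succ]
        push_cast
        ring

theorem stirlingPowerSum_zero_left (s : ℝ) (n : ℕ) : stirlingPowerSum s 0 n = s ^ n := by
  simp [stirlingPowerSum, fallingFactorial]

theorem stirlingPowerSum_zero_right (s : ℝ) (m : ℕ) : stirlingPowerSum s m 0 = s ^ m := by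
  induction m with
  | zero => exact stirlingPowerSum_zero_left s 0
  | succ m ih =>
    rw [stirlingPowerSum_succ_left, pow_succ, ← ih, stirlingPowerSum, sum_mul]
    refine sum_congr rfl fun k _ => ?_
    ring

theorem stirlingPowerSum_succ_left_add_succ_right (s : ℝ) (m n : ℕ) :
    stirlingPowerSum s (m + 1) n + stirlingPowerSum s m (n + 1) =
      s * stirlingPowerSum s m n + s * stirlingPowerSum (s - 1) m n := by
  rw [stirlingPowerSum_succ_left]
  simp only [stirlingPowerSum, Finset.mul_sum, ← sum_add_distrib]
  refine sum_congr rfl fun k _ => ?_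
  have h : s * fallingFactorial (s - 1) k = fallingFactorial s k * (s - k) := by
    rw [← fallingFactorial_succ_eq_mul_sub_one, fallingFactorial_succ]
  linear_combination -((stirlingSecond m k : ℝ) * (s - 1 - k) ^ n) * h

theorem stirlingPowerSum_comm (s : ℝ) (m n : ℕ) :
    stirlingPowerSum s m n = stirlingPowerSum s n m := by
  induction m generalizing s n with
  | zero => rw [stirlingPowerSum_zero_left, stirlingPowerSum_zero_right]
  | succ m ih =>
    have hm := stirlingPowerSum_succ_left_add_succ_right s m n
    have hn := stirlingPowerSum_succ_left_add_succ_right s n m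
    rw [ih s n, ih (s - 1) n, ih s (n + 1)] at hm
    linarith

theorem hasDerivAt_exp_mul_rpow_const_add_exp_neg (a c t : ℝ) {y : ℝ} (hy : 0 < c + exp (-y)) :
    HasDerivAt (fun y => exp (-(a * y)) * (c + exp (-y)) ^ t)
      (-(a * (exp (-(a * y)) * (c + exp (-y)) ^ t) +
        t * (exp (-((a + 1) * y)) * (c + exp (-y)) ^ (t - 1)))) y := by
  have hexp : HasDerivAt (fun y => exp (-(a * y))) (-(a * exp (-(a * y)))) y := by
    simpa [mul_comm] using (((hasDerivAt_id y).const_mul a).neg).exp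
  have hbase : HasDerivAt (fun y => c + exp (-y)) (-exp (-y)) y := by
    simpa using ((hasDerivAt_id y).neg.exp).const_add c
  refine (hexp.mul (hbase.rpow_const (Or.inl hy.ne'))).congr_deriv ?_
  rw [show -((a + 1) * y) = -(a * y) + -y by ring, exp_add]
  ring

theorem iteratedDeriv_rpow_const_add_exp_neg (c s : ℝ) (n : ℕ) {y : ℝ}
    (hy : 0 < c + exp (-y)) :
    iteratedDeriv n (fun y => (c + exp (-y)) ^ s) y = (-1) ^ n * ∑ k ∈ range (n + 1),
      (stirlingSecond n k : ℝ) *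
        (fallingFactorial s k * (exp (-(k * y)) * (c + exp (-y)) ^ (s - k))) := by
  induction n generalizing y with
  | zero => simp [fallingFactorial]
  | succ n ih =>
    have hev : iteratedDeriv n (fun y => (c + exp (-y)) ^ s) =ᶠ[𝓝 y] fun y =>
        (-1) ^ n * ∑ k ∈ range (n + 1), (stirlingSecond n k : ℝ) *
          (fallingFactorial s k * (exp (-(k * y)) * (c + exp (-y)) ^ (s - k))) := by
      filter_upwards [(isOpen_lt continuous_const
        (by fun_prop : Continuous fun z => c + exp (-z))).mem_nhds hy] with z hz
      exact ih hz
    have hderiv := (HasDerivAt.fun_sum fun k (_ : k ∈ range (n + 1)) =>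
      ((hasDerivAt_exp_mul_rpow_const_add_exp_neg k c (s - k) hy).const_mul
        (fallingFactorial s k)).const_mul (stirlingSecond n k : ℝ)).const_mul ((-1 : ℝ) ^ n)
    rw [iteratedDeriv_succ, hev.deriv_eq, hderiv.deriv, sum_range_stirlingSecond_succ_mul,
      pow_succ, mul_assoc, neg_one_mul, ← sum_neg_distrib]
    congr 1
    refine sum_congr rfl fun k _ => ?_
    rw [fallingFactorial_succ, sub_sub]
    push_cast
    ring

theorem iteratedDeriv_sum_mul_exp_mul {ι : Type*} (u : Finset ι) (b a : ι → ℝ) (m : ℕ) (x : ℝ) :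
    iteratedDeriv m (fun x => ∑ i ∈ u, b i * exp (a i * x)) x =
      ∑ i ∈ u, b i * (a i ^ m * exp (a i * x)) := by
  rw [iteratedDeriv_fun_sum fun i _ => by fun_prop]
  simp [iteratedDeriv_const_mul_field]

/-- `∂_x^m ∂_y^n (e^{-x} + e^{-y} - 1)^s` at `(x,y) = (0,0)` equals
`(-1)^{m+n} Σ_{ℓ=0}^{m} (s)_ℓ S(m,ℓ) (s-ℓ)^n`, where the power on the left-hand
side is the real power `a ^ b = exp (b * log a)`. -/
theorem mixed_deriv_exp_neg_add_exp_neg_sub_one_rpow (s : ℝ) (m n : ℕ) :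
    iteratedDeriv m (fun x : ℝ =>
        iteratedDeriv n (fun y : ℝ => (Real.exp (-x) + Real.exp (-y) - 1) ^ s) 0) 0 =
      (-1 : ℝ) ^ (m + n) *
        ∑ l ∈ Finset.range (m + 1),
          fallingFactorial s l * (stirling2 m l : ℝ) * (s - l) ^ n := by
  have inner (x : ℝ) : iteratedDeriv n (fun y => (exp (-x) + exp (-y) - 1) ^ s) 0 =
      ∑ k ∈ range (n + 1),
        (-1) ^ n * (stirlingSecond n k * fallingFactorial s k) * exp ((k - s) * x) := by
    have hpos : 0 < exp (-x) - 1 + exp (-0) := by simp [exp_pos]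
    simp only [← sub_add_eq_add_sub]
    rw [iteratedDeriv_rpow_const_add_exp_neg _ s n hpos, mul_sum]
    refine sum_congr rfl fun k _ => ?_
    simp only [mul_zero, neg_zero, exp_zero, sub_add_cancel, ← exp_mul, one_mul]
    ring_nf
  simp only [inner, iteratedDeriv_sum_mul_exp_mul, mul_zero, exp_zero, mul_one]
  rw [stirling2_eq_stirlingSecond]
  change _ = (-1) ^ (m + n) * stirlingPowerSum s m n
  rw [stirlingPowerSum_comm, stirlingPowerSum, mul_sum]
  refine sum_congr rfl fun k _ => ?_
  rw [← neg_sub s (k : ℝ), neg_pow (s - k), pow_add]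
  ring
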